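/- arXiv:math/0209293 — 2 statements merged into one kernel-verified Lean document; each statement's English description precedes it below -/
import Mathlib

section
/- Let (A, m) be a Noetherian local ring, let I ⊆ m be an ideal, let M be a finitely generated A-module, and let L ⊆ K be submodules of M such that the length λ(K/L) is finite. Then there exists N such that for all n ≥ N one has K ∩ IⁿM = L ∩ IⁿM. (Key step in the proof of Dade's Lemma.) -/
noncomputable def moduleLength (A M : Type*) [CommRing A] [AddCommGroup M] [Module A M] : ℕ∞ :=
  (Order.krullDim (Submodule A M)).unbotD 0

/-- `lenQuot L K` is the length `λ(K/L)` of the subquotient `K/L` of `M`,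
realized as the image of `K` in `M ⧸ L`. -/
noncomputable def lenQuot {A M : Type*} [CommRing A] [AddCommGroup M] [Module A M]
    (L K : Submodule A M) : ℕ∞ :=
  moduleLength A ↥(K.map L.mkQ)

/-!
The quotient `K/L` has finite length, so it is killed by a power `𝔪ᶜ` of the maximal ideal
(the chain `𝔪ⁿ(K/L)` stabilises, and Nakayama makes the stable term zero). By Artin–Rees,
`IⁿM ∩ K ⊆ IᶜK ⊆ 𝔪ᶜK ⊆ L` for all large `n`.
-/

open IsLocalRing

lemma moduleLength_eq_length (A M : Type*) [CommRing A] [AddCommGroup M] [Module A M] :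
    moduleLength A M = Module.length A M := by
  rw [moduleLength, ← Module.coe_length, WithBot.unbotD_coe]

lemma IsLocalRing.exists_maximalIdeal_pow_smul_top_eq_bot {R M : Type*} [CommRing R]
    [IsLocalRing R] [AddCommGroup M] [Module R M] [IsArtinian R M] [IsNoetherian R M] :
    ∃ n : ℕ, maximalIdeal R ^ n • (⊤ : Submodule R M) = ⊥ := by
  obtain ⟨n, hn⟩ := IsArtinian.monotone_stabilizes (R := R) (M := M)
    ⟨fun n => OrderDual.toDual (maximalIdeal R ^ n • ⊤),
      fun _ _ h => Submodule.smul_mono_left (Ideal.pow_le_pow_right h)⟩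
  refine ⟨n, Submodule.eq_bot_of_le_smul_of_le_jacobson_bot (maximalIdeal R) _
    (IsNoetherian.noetherian _) ?_ (maximalIdeal_le_jacobson _)⟩
  rw [← Submodule.mul_smul, ← pow_succ']
  exact le_of_eq (hn (n + 1) n.le_succ)

lemma Submodule.exists_maximalIdeal_pow_smul_le_of_length_ne_top {R M : Type*} [CommRing R]
    [IsLocalRing R] [AddCommGroup M] [Module R M] (L K : Submodule R M)
    (hfin : Module.length R (K.map L.mkQ) ≠ ⊤) :
    ∃ c : ℕ, maximalIdeal R ^ c • K ≤ L := by
  obtain ⟨_, _⟩ := isFiniteLength_iff_isNoetherian_isArtinian.mp (Module.length_ne_top_iff.mp hfin)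
  obtain ⟨c, hc⟩ := exists_maximalIdeal_pow_smul_top_eq_bot (R := R) (M := K.map L.mkQ)
  refine ⟨c, ?_⟩
  rw [← L.ker_mkQ, LinearMap.le_ker_iff_map, Submodule.map_smul'']
  have := congrArg (Submodule.map (K.map L.mkQ).subtype) hc
  rwa [Submodule.map_smul'', Submodule.map_top, Submodule.range_subtype, Submodule.map_bot] at this

lemma Ideal.exists_pow_smul_top_inf_le_pow_smul {R M : Type*} [CommRing R] [IsNoetherianRing R]
    [AddCommGroup M] [Module R M] [Module.Finite R M] (I : Ideal R) (K : Submodule R M) (c : ℕ) :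
    ∃ N : ℕ, ∀ n ≥ N, I ^ n • ⊤ ⊓ K ≤ I ^ c • K := by
  obtain ⟨k, hk⟩ := I.exists_pow_inf_eq_pow_smul K
  refine ⟨k + c, fun n hn => ?_⟩
  calc I ^ n • ⊤ ⊓ K = I ^ (n - k) • (I ^ k • ⊤ ⊓ K) := hk n (by omega)
    _ ≤ I ^ c • K := Submodule.smul_mono (Ideal.pow_le_pow_right (by omega)) inf_le_right

/-- Key step in the proof of Dade's Lemma: if `L ≤ K` are submodules of a finitely
generated module `M` over a Noetherian local ring with `λ(K/L)` finite and `I ≤ 𝔪`,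
then `K ∩ IⁿM = L ∩ IⁿM` for all large `n`. -/
theorem stmt_1 {A M : Type*} [CommRing A] [IsLocalRing A] [IsNoetherianRing A]
    [AddCommGroup M] [Module A M] [Module.Finite A M]
    (I : Ideal A) (hI : I ≤ IsLocalRing.maximalIdeal A)
    (L K : Submodule A M) (hLK : L ≤ K) (hfin : lenQuot L K < ⊤) :
    ∃ N : ℕ, ∀ n ≥ N,
      K ⊓ I ^ n • (⊤ : Submodule A M) = L ⊓ I ^ n • (⊤ : Submodule A M) := by
  obtain ⟨c, hc⟩ := L.exists_maximalIdeal_pow_smul_le_of_length_ne_top K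
    (by rw [lenQuot, moduleLength_eq_length] at hfin; exact hfin.ne)
  obtain ⟨N, hN⟩ := I.exists_pow_smul_top_inf_le_pow_smul K c
  refine ⟨N, fun n hn => le_antisymm (le_inf ?_ inf_le_right) (inf_le_inf_right _ hLK)⟩
  calc K ⊓ I ^ n • ⊤ = I ^ n • ⊤ ⊓ K := inf_comm _ _
    _ ≤ I ^ c • K := hN n hn
    _ ≤ maximalIdeal A ^ c • K := Submodule.smul_mono_left (Ideal.pow_right_mono hI c)
    _ ≤ L := hc
end

section
/- Let A be a Noetherian ring, let M be a finitely generated faithful A-module, and let I ⊆ J be ideals of A. If I is a reduction of (J, M), i.e. I • (Jⁿ • M) = J^{n+1} • M for some n, then I is a reduction of the ideal J, i.e. there exists m with I · Jᵐ = J^{m+1}. (Remark following Proposition 3.7.) -/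
/-!
For `x ∈ J`, multiplication by `x` maps `N = Jⁿ • M` into `I • N`, so by the determinant trick
`x` is a root on `N` of a monic polynomial `p` of degree `d` whose coefficient of `Xᵏ` lies in
`I ^ (d - k)`. As `M` is faithful, `p(x) Jⁿ = 0`, whence `x ^ (d + 1) Jⁿ ⊆ I J ^ d Jⁿ`.
The property "`K ^ (e + 1) Jⁿ ⊆ I J ^ e Jⁿ` for some `e`" of ideals `K ⊆ J` passes to sums
by the binomial expansion, hence to the finitely generated ideal `J` itself, and for `K = J` it
says `J ^ (n + e + 1) = I J ^ (n + e)`.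
-/

open Polynomial

namespace Submodule

variable {A M : Type*} [CommRing A] [AddCommGroup M] [Module A M]

theorem exists_monic_coeff_mem_pow_eval_mem_annihilator {N : Submodule A M} (hN : N.FG)
    (I : Ideal A) {x : A} (hx : ∀ v ∈ N, x • v ∈ I • N) :
    ∃ p : A[X], p.Monic ∧ (∀ k, p.coeff k ∈ I ^ (p.natDegree - k)) ∧
      p.eval x ∈ N.annihilator := by
  have : Module.Finite A N := Module.Finite.iff_fg.mpr hN
  obtain ⟨p, hp, -, hcoeff, hpx⟩ :=
    LinearMap.exists_monic_and_natDegree_eq_and_coeff_mem_pow_and_aeval_eq_zero A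
      (Algebra.lsmul A A N x) I (by
        rintro _ ⟨v, rfl⟩
        exact (mem_smul_top_iff I N _).mpr (hx v v.2))
  refine ⟨p, hp, hcoeff, Module.mem_annihilator.mpr fun v => ?_⟩
  rw [aeval_algHom_apply] at hpx
  simpa [coe_aeval_eq_eval] using LinearMap.congr_fun hpx v

end Submodule

namespace Ideal

variable {A : Type*} [CommRing A] {I J L P Q K : Ideal A}

theorem pow_le_pow_mul_pow_of_le (hPJ : P ≤ J) {a k : ℕ} (hak : a ≤ k) :
    P ^ k ≤ P ^ a * J ^ (k - a) := by
  rw [← Nat.add_sub_cancel' hak, pow_add, Nat.add_sub_cancel_left]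
  exact mul_mono_right (pow_right_mono hPJ _)

theorem sup_pow_add_add_one_le (hP : P ≤ J) (hQ : Q ≤ J) (a b : ℕ) :
    (P ⊔ Q) ^ (a + b + 1) ≤ P ^ (a + 1) * J ^ b ⊔ Q ^ (b + 1) * J ^ a := by
  rw [← add_eq_sup, add_pow, sum_eq_sup]
  refine Finset.sup_le fun i hi => mul_le_left.trans ?_
  rw [Finset.mem_range] at hi
  by_cases hai : a + 1 ≤ i
  · calc P ^ i * Q ^ (a + b + 1 - i)
        ≤ P ^ (a + 1) * J ^ (i - (a + 1)) * J ^ (a + b + 1 - i) :=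
          mul_le_mul' (pow_le_pow_mul_pow_of_le hP hai) (pow_right_mono hQ _)
      _ = P ^ (a + 1) * J ^ b := by
          rw [mul_assoc, ← pow_add]; congr 2; omega
      _ ≤ _ := le_sup_left
  · calc P ^ i * Q ^ (a + b + 1 - i)
        ≤ J ^ i * (Q ^ (b + 1) * J ^ (a + b + 1 - i - (b + 1))) :=
          mul_le_mul' (pow_right_mono hP _) (pow_le_pow_mul_pow_of_le hQ (by omega))
      _ = Q ^ (b + 1) * J ^ a := by
          rw [mul_left_comm, ← pow_add]; congr 2; omega
      _ ≤ _ := le_sup_right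

theorem exists_sup_pow_succ_mul_le (hP : P ≤ J) (hQ : Q ≤ J)
    (hPI : ∃ e, P ^ (e + 1) * L ≤ I * J ^ e * L) (hQI : ∃ e, Q ^ (e + 1) * L ≤ I * J ^ e * L) :
    ∃ e, (P ⊔ Q) ^ (e + 1) * L ≤ I * J ^ e * L := by
  obtain ⟨a, ha⟩ := hPI
  obtain ⟨b, hb⟩ := hQI
  refine ⟨a + b, ?_⟩
  calc (P ⊔ Q) ^ (a + b + 1) * L
      ≤ (P ^ (a + 1) * J ^ b ⊔ Q ^ (b + 1) * J ^ a) * L :=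
        mul_le_mul_left (sup_pow_add_add_one_le hP hQ a b) L
    _ = P ^ (a + 1) * L * J ^ b ⊔ Q ^ (b + 1) * L * J ^ a := by
        rw [sup_mul, mul_right_comm, mul_right_comm (Q ^ _)]
    _ ≤ I * J ^ a * L * J ^ b ⊔ I * J ^ b * L * J ^ a :=
        sup_le_sup (mul_le_mul_left ha _) (mul_le_mul_left hb _)
    _ = I * J ^ (a + b) * L := by
        rw [show I * J ^ b * L * J ^ a = I * J ^ a * L * J ^ b by ring, sup_idem, pow_add]
        ring

theorem exists_pow_succ_mul_le_of_fg (hK : K.FG) (hKJ : K ≤ J)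
    (h : ∀ x ∈ J, ∃ e, span {x} ^ (e + 1) * L ≤ I * J ^ e * L) :
    ∃ e, K ^ (e + 1) * L ≤ I * J ^ e * L := by
  induction K, hK using Submodule.fg_induction with
  | singleton x => exact h x (hKJ (mem_span_singleton_self x))
  | sup P Q _ _ hP hQ =>
    exact exists_sup_pow_succ_mul_le (le_sup_left.trans hKJ) (le_sup_right.trans hKJ)
      (hP (le_sup_left.trans hKJ)) (hQ (le_sup_right.trans hKJ))

theorem pow_succ_mul_mem_of_eval_mul_eq_zero (hIJ : I ≤ J) {p : A[X]} (hp : p.Monic)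
    (hcoeff : ∀ k, p.coeff k ∈ I ^ (p.natDegree - k)) {x j : A} (hx : x ∈ J) (hj : j ∈ L)
    (hpx : p.eval x * j = 0) :
    x ^ (p.natDegree + 1) * j ∈ I * J ^ p.natDegree * L := by
  set d := p.natDegree
  have heval : p.eval x = x ^ d + ∑ i ∈ Finset.range d, p.coeff i * x ^ i := by
    conv_lhs => rw [hp.as_sum]
    simp [eval_finsetSum, d]
  have hsum : x ^ (d + 1) * j = -∑ i ∈ Finset.range d, p.coeff i * x ^ (i + 1) * j := by
    rw [show ∑ i ∈ Finset.range d, p.coeff i * x ^ (i + 1) * j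
        = x * (∑ i ∈ Finset.range d, p.coeff i * x ^ i) * j by
      rw [Finset.mul_sum, Finset.sum_mul]; exact Finset.sum_congr rfl fun i _ => by ring]
    rw [heval] at hpx
    linear_combination x * hpx
  rw [hsum]
  refine neg_mem (Submodule.sum_mem _ fun i hi => ?_)
  have hid : i < d := Finset.mem_range.mp hi
  have hle : I ^ (d - i) * J ^ (i + 1) ≤ I * J ^ d := by
    calc I ^ (d - i) * J ^ (i + 1) = I * (I ^ (d - i - 1) * J ^ (i + 1)) := by
          rw [← mul_assoc, ← pow_succ', Nat.sub_add_cancel (by omega)]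
      _ ≤ I * (J ^ (d - i - 1) * J ^ (i + 1)) :=
          mul_mono_right (mul_mono_left (pow_right_mono hIJ _))
      _ = I * J ^ d := by rw [← pow_add]; congr 2; omega
  exact mul_mono_left hle (mul_mem_mul (mul_mem_mul (hcoeff i) (pow_mem_pow hx _)) hj)

section Faithful

variable {M : Type*} [AddCommGroup M] [Module A M]

theorem exists_span_singleton_pow_succ_mul_le (hfaith : Module.annihilator A M = ⊥)
    (hIJ : I ≤ J) {N : Submodule A M} (hN : N.FG) (hLN : L • ⊤ ≤ N) {x : A} (hx : x ∈ J)
    (hxN : ∀ v ∈ N, x • v ∈ I • N) :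
    ∃ e, span {x} ^ (e + 1) * L ≤ I * J ^ e * L := by
  obtain ⟨p, hp, hcoeff, hpx⟩ :=
    Submodule.exists_monic_coeff_mem_pow_eval_mem_annihilator hN I hxN
  refine ⟨p.natDegree, ?_⟩
  rw [span_singleton_pow, span_singleton_mul_le_iff]
  refine fun j hj => pow_succ_mul_mem_of_eval_mul_eq_zero hIJ hp hcoeff hx hj ?_
  rw [← Submodule.mem_bot A, ← hfaith, Module.mem_annihilator]
  intro m
  rw [mul_smul]
  exact Submodule.mem_annihilator.mp hpx _ (hLN (Submodule.smul_mem_smul hj trivial))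

end Faithful

end Ideal

/-- Remark following Proposition 3.7: if `M` is a finitely generated faithful module
over a Noetherian ring and `I ≤ J` is a reduction of `(J, M)`, then `I` is a
reduction of the ideal `J`. -/
theorem stmt_9 {A M : Type*} [CommRing A] [IsNoetherianRing A]
    [AddCommGroup M] [Module A M] [Module.Finite A M]
    (hfaith : Module.annihilator A M = ⊥)
    (I J : Ideal A) (hIJ : I ≤ J)
    (hred : ∃ n : ℕ, I • (J ^ n • (⊤ : Submodule A M)) = J ^ (n + 1) • (⊤ : Submodule A M)) :
    ∃ m : ℕ, I * J ^ m = J ^ (m + 1) := by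
  obtain ⟨n, hred⟩ := hred
  set N := J ^ n • (⊤ : Submodule A M)
  have hxN : ∀ x ∈ J, ∀ v ∈ N, x • v ∈ I • N := by
    intro x hx v hv
    rw [hred, pow_succ', mul_smul]
    exact Submodule.smul_mem_smul hx hv
  obtain ⟨e, he⟩ := Ideal.exists_pow_succ_mul_le_of_fg (IsNoetherian.noetherian J) le_rfl
    fun x hx => Ideal.exists_span_singleton_pow_succ_mul_le hfaith hIJ
      (IsNoetherian.noetherian N) le_rfl hx (hxN x hx)
  refine ⟨n + e, le_antisymm ?_ ?_⟩
  · exact (Ideal.mul_mono_left hIJ).trans_eq (pow_succ' J _).symm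
  · calc J ^ (n + e + 1) = J ^ (e + 1) * J ^ n := by rw [← pow_add]; ring_nf
      _ ≤ I * J ^ e * J ^ n := he
      _ = I * J ^ (n + e) := by ring
end
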